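/- Let n, k, r be positive integers with 2k ≤ n. Let X be a (k−1)-wise independent random variable on {0,1}^n with normalized density f(x) = 2^n·Pr(X = x). Suppose d : {0,1}^n → ℝ≥0 satisfies E[d] = 1, d is supported on the Hamming ball B_r of radius r around 0^n, and (Ad)(x) ≥ (n − 2k + 1)·d(x) for all x, where A is the adjacency operator of the Hamming graph. Then g = f ∗ d satisfies E[g²] ≤ n. -/

import Mathlib

/-- `p` is the probability mass function of a `k`-wise independent random variable
taking values in `{0,1}^n`. -/
def KWiseIndep (n k : ℕ) (p : (Fin n → Bool) → ℝ) : Prop :=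
  ∀ S : Finset (Fin n), S.card ≤ k → ∀ a : Fin n → Bool,
    (∑ x ∈ Finset.univ.filter fun x => ∀ i ∈ S, x i = a i, p x) = (1 / 2 : ℝ) ^ S.card

/-- The adjacency operator of the Hamming graph on `{0,1}^n`. -/
def adjOp {n : ℕ} (f : (Fin n → Bool) → ℝ) (x : Fin n → Bool) : ℝ :=
  ∑ y ∈ Finset.univ.filter fun y => hammingDist x y = 1, f y

/-- Convolution on `{0,1}^n`: `(f ∗ d)(x) = E_y[f(y)·d(x ⊕ y)]`, `y` uniform. -/
noncomputable def cubeConv {n : ℕ} (f d : (Fin n → Bool) → ℝ) (x : Fin n → Bool) : ℝ :=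
  (∑ y, f y * d fun i => xor (x i) (y i)) / 2 ^ n

/-- Hamming weight of `x ∈ {0,1}^n`. -/
def hWt {n : ℕ} (x : Fin n → Bool) : ℕ := (Finset.univ.filter fun i => x i = true).card

/-!
Walsh–Fourier analysis on the cube. Convolution multiplies Walsh coefficients, so
`ĝ(∅) = f̂(∅) d̂(∅) = 1`, and `(k − 1)`-wise independence makes `f̂(S)`, hence `ĝ(S)`, vanish
for `0 < |S| < k`. The adjacency operator commutes with convolution and acts on the `S`-th
character by `n − 2|S|`. As `g ≥ 0` inherits `A g ≥ (n − 2k + 1) g` from `d`,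
`(n − 2k + 1) E[g²] ≤ E[g · A g] = ∑ (n − 2|S|) ĝ(S)² ≤ (n − 2k) E[g²] + 2k`,
so `E[g²] ≤ 2k ≤ n`.
-/

open Finset
open scoped symmDiff

namespace BoolCube

variable {n : ℕ}

lemma xor_eq_symmDiff (x y : Fin n → Bool) : (fun i => xor (x i) (y i)) = x ∆ y := by
  funext i
  rw [Pi.symmDiff_apply]
  cases x i <;> cases y i <;> rfl

lemma cubeConv_eq_sum_symmDiff (f d : (Fin n → Bool) → ℝ) (x : Fin n → Bool) :
    cubeConv f d x = (∑ y, f y * d (x ∆ y)) / 2 ^ n := by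
  simp only [cubeConv, xor_eq_symmDiff]

lemma sum_comp_symmDiff (F : (Fin n → Bool) → ℝ) (y : Fin n → Bool) :
    ∑ x, F (x ∆ y) = ∑ x, F x :=
  Equiv.sum_comp ((symmDiff_left_involutive y).toPerm _) F

def unitVec (i : Fin n) : Fin n → Bool := fun j => decide (j = i)

lemma hammingDist_eq_one_iff (x y : Fin n → Bool) :
    hammingDist x y = 1 ↔ ∃ i, y = x ∆ unitVec i := by
  simp only [hammingDist, card_eq_one, Finset.ext_iff, funext_iff, mem_filter, mem_univ,
    true_and, mem_singleton, Pi.symmDiff_apply, unitVec]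
  refine exists_congr fun i => forall_congr' fun j => ?_
  by_cases h : j = i <;> cases x j <;> cases y j <;> simp [h]

lemma adjOp_eq_sum_unitVec (g : (Fin n → Bool) → ℝ) (x : Fin n → Bool) :
    adjOp g x = ∑ i, g (x ∆ unitVec i) := by
  have hinj : Function.Injective fun i : Fin n => x ∆ unitVec i := fun i j h => by
    simpa [unitVec] using congrFun (symmDiff_right_injective x h) i
  have hsphere : univ.filter (fun y => hammingDist x y = 1) = univ.image (x ∆ unitVec ·) := by
    ext y
    simp only [mem_filter, mem_univ, true_and, mem_image, hammingDist_eq_one_iff]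
    exact exists_congr fun i => eq_comm
  rw [adjOp, hsphere, sum_image fun i _ j _ h => hinj h]

lemma adjOp_cubeConv (f d : (Fin n → Bool) → ℝ) (x : Fin n → Bool) :
    adjOp (cubeConv f d) x = cubeConv f (adjOp d) x := by
  simp only [adjOp_eq_sum_unitVec, cubeConv_eq_sum_symmDiff, ← sum_div, mul_sum]
  rw [sum_comm]
  simp only [symmDiff_right_comm]

lemma cubeConv_nonneg {f d : (Fin n → Bool) → ℝ} (hf : ∀ x, 0 ≤ f x) (hd : ∀ x, 0 ≤ d x)
    (x : Fin n → Bool) : 0 ≤ cubeConv f d x := by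
  rw [cubeConv_eq_sum_symmDiff]
  exact div_nonneg (sum_nonneg fun y _ => mul_nonneg (hf y) (hd _)) (by positivity)

lemma const_mul_cubeConv (c : ℝ) (f d : (Fin n → Bool) → ℝ) (x : Fin n → Bool) :
    c * cubeConv f d x = cubeConv f (fun y => c * d y) x := by
  simp only [cubeConv_eq_sum_symmDiff, mul_div_assoc', mul_sum]
  congr 1
  exact sum_congr rfl fun y _ => by ring

lemma cubeConv_mono_right {f d d' : (Fin n → Bool) → ℝ} (hf : ∀ x, 0 ≤ f x)
    (hd : ∀ x, d x ≤ d' x) (x : Fin n → Bool) : cubeConv f d x ≤ cubeConv f d' x := by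
  simp only [cubeConv_eq_sum_symmDiff]
  gcongr with y
  · exact hf y
  · exact hd _

noncomputable def walsh (S : Finset (Fin n)) (x : Fin n → Bool) : ℝ :=
  ∏ i ∈ S, if x i then -1 else 1

noncomputable def walshCoeff (g : (Fin n → Bool) → ℝ) (S : Finset (Fin n)) : ℝ :=
  (∑ x, g x * walsh S x) / 2 ^ n

lemma walsh_empty (x : Fin n → Bool) : walsh ∅ x = 1 := prod_empty

lemma walsh_symmDiff (S : Finset (Fin n)) (x y : Fin n → Bool) :
    walsh S (x ∆ y) = walsh S x * walsh S y := by
  rw [walsh, walsh, walsh, ← prod_mul_distrib]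
  refine prod_congr rfl fun i _ => ?_
  rw [Pi.symmDiff_apply]
  cases x i <;> cases y i <;> norm_num

lemma walsh_unitVec (S : Finset (Fin n)) (i : Fin n) :
    walsh S (unitVec i) = if i ∈ S then -1 else 1 := by
  simp only [walsh, unitVec, decide_eq_true_eq]
  exact prod_ite_eq' S i fun _ => -1

lemma sum_walsh_mul_walsh (x y : Fin n → Bool) :
    ∑ S, walsh S x * walsh S y = if x = y then 2 ^ n else 0 := by
  simp only [← walsh_symmDiff]
  simp only [walsh]
  rw [← powerset_univ, ← prod_one_add]
  split_ifs with hxy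
  · simp [hxy, one_add_one_eq_two]
  · obtain ⟨i, hi⟩ : ∃ i, (x ∆ y) i = true := by
      by_contra! h
      exact hxy (symmDiff_eq_bot.1 (funext fun i => by simpa using h i))
    exact prod_eq_zero (mem_univ i) (by simp [hi])

lemma sum_walshCoeff_mul_walshCoeff (g h : (Fin n → Bool) → ℝ) :
    ∑ S, walshCoeff g S * walshCoeff h S = (∑ x, g x * h x) / 2 ^ n := by
  calc ∑ S, walshCoeff g S * walshCoeff h S
      = (∑ S, ∑ x, ∑ y, g x * h y * (walsh S x * walsh S y)) / (2 ^ n * 2 ^ n) := by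
        rw [sum_div]
        refine sum_congr rfl fun S _ => ?_
        rw [walshCoeff, walshCoeff, div_mul_div_comm, sum_mul_sum]
        exact congrArg (· / _) (sum_congr rfl fun x _ => sum_congr rfl fun y _ => by ring)
    _ = (∑ x, ∑ y, g x * h y * ∑ S, walsh S x * walsh S y) / (2 ^ n * 2 ^ n) := by
        simp only [mul_sum]
        rw [sum_comm]
        exact congrArg (· / _) (sum_congr rfl fun x _ => sum_comm)
    _ = (∑ x, g x * h x) / 2 ^ n := by
        simp only [sum_walsh_mul_walsh, mul_ite, mul_zero, sum_ite_eq, mem_univ, if_true]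
        rw [← sum_mul]
        field_simp

lemma walshCoeff_empty (g : (Fin n → Bool) → ℝ) : walshCoeff g ∅ = (∑ x, g x) / 2 ^ n := by
  simp only [walshCoeff, walsh_empty, mul_one]

lemma sum_mul_walsh_comp_symmDiff (g : (Fin n → Bool) → ℝ) (S : Finset (Fin n))
    (y : Fin n → Bool) : ∑ x, g (x ∆ y) * walsh S x = walsh S y * ∑ x, g x * walsh S x := by
  calc ∑ x, g (x ∆ y) * walsh S x = ∑ x, g (x ∆ y ∆ y) * walsh S (x ∆ y) :=
        (sum_comp_symmDiff (fun x => g (x ∆ y) * walsh S x) y).symm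
    _ = walsh S y * ∑ x, g x * walsh S x := by
        simp only [symmDiff_symmDiff_cancel_right, walsh_symmDiff, mul_sum]
        exact sum_congr rfl fun x _ => by ring

lemma walshCoeff_cubeConv (f d : (Fin n → Bool) → ℝ) (S : Finset (Fin n)) :
    walshCoeff (cubeConv f d) S = walshCoeff f S * walshCoeff d S := by
  have hconv : ∑ x, cubeConv f d x * walsh S x
      = (∑ y, f y * walsh S y) * (∑ z, d z * walsh S z) / 2 ^ n := by
    simp only [cubeConv_eq_sum_symmDiff, div_mul_eq_mul_div, sum_mul, ← sum_div]
    rw [sum_comm]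
    refine congrArg (· / _) (sum_congr rfl fun y _ => ?_)
    simp only [mul_assoc, ← mul_sum]
    rw [sum_mul_walsh_comp_symmDiff d S y]
  rw [walshCoeff, hconv, walshCoeff, walshCoeff]
  ring

lemma walshCoeff_adjOp (g : (Fin n → Bool) → ℝ) (S : Finset (Fin n)) :
    walshCoeff (adjOp g) S = (n - 2 * #S) * walshCoeff g S := by
  have hcount : ∑ i, walsh S (unitVec i) = n - 2 * #S := by
    have hsign : ∀ i, (if i ∈ S then -1 else 1 : ℝ) = 1 - 2 * if i ∈ S then 1 else 0 := by
      intro i; split_ifs <;> norm_num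
    simp only [walsh_unitVec, hsign, mul_ite, mul_one, mul_zero, sum_sub_distrib, sum_const,
      card_univ, Fintype.card_fin, nsmul_eq_mul, sum_ite_mem, univ_inter, sub_right_inj]
    ring
  simp only [walshCoeff, adjOp_eq_sum_unitVec, sum_mul]
  rw [sum_comm]
  simp only [sum_mul_walsh_comp_symmDiff, ← sum_mul, hcount, mul_div_assoc]

lemma walsh_eq_sum_powerset (S : Finset (Fin n)) (x : Fin n → Bool) :
    walsh S x = ∑ T ∈ S.powerset, (-2) ^ #T * if ∀ i ∈ T, x i = true then 1 else 0 := by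
  have hsign : ∀ i, (if x i then -1 else 1 : ℝ) = 1 + -2 * if x i then 1 else 0 := by
    intro i; split_ifs <;> norm_num
  simp only [walsh, hsign, prod_one_add, prod_mul_distrib, prod_const, prod_boole]
  congr!

lemma sum_mul_walsh_of_kWiseIndep {k : ℕ} {p : (Fin n → Bool) → ℝ} (hp : KWiseIndep n k p)
    {S : Finset (Fin n)} (hS : #S ≤ k) :
    ∑ x, p x * walsh S x = if S = ∅ then 1 else 0 := by
  have hmarginal : ∀ T ∈ S.powerset,
      ∑ x, p x * ((-2) ^ #T * if ∀ i ∈ T, x i = true then 1 else 0) = (-1) ^ #T := by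
    intro T hTS
    have hT := hp T ((card_le_card (mem_powerset.1 hTS)).trans hS) fun _ => true
    calc ∑ x, p x * ((-2) ^ #T * if ∀ i ∈ T, x i = true then 1 else 0)
        = (-2) ^ #T * ∑ x, if ∀ i ∈ T, x i = true then p x else 0 := by
          rw [mul_sum]
          exact sum_congr rfl fun x _ => by split_ifs <;> ring
      _ = (-1) ^ #T := by
          rw [← sum_filter, hT, ← mul_pow]
          norm_num
  simp only [walsh_eq_sum_powerset, mul_sum]
  rw [sum_comm, sum_congr rfl hmarginal]
  exact_mod_cast sum_powerset_neg_one_pow_card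

lemma walshCoeff_density (p : (Fin n → Bool) → ℝ) (S : Finset (Fin n)) :
    walshCoeff (fun x => 2 ^ n * p x) S = ∑ x, p x * walsh S x := by
  simp only [walshCoeff, mul_assoc, ← mul_sum]
  field_simp

lemma sum_mul_walshCoeff_sq_le {g : (Fin n → Bool) → ℝ} {k : ℕ} (h0 : walshCoeff g ∅ = 1)
    (hlow : ∀ S, S ≠ ∅ → #S < k → walshCoeff g S = 0) :
    ∑ S, (n - 2 * #S : ℝ) * walshCoeff g S ^ 2
      ≤ (n - 2 * k) * ∑ S, walshCoeff g S ^ 2 + 2 * k := by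
  calc ∑ S, (n - 2 * #S : ℝ) * walshCoeff g S ^ 2
      ≤ ∑ S, ((n - 2 * k) * walshCoeff g S ^ 2 + if S = ∅ then (2 * k : ℝ) else 0) := by
        refine sum_le_sum fun S _ => ?_
        by_cases hS : S = ∅
        · simp [hS, h0]
        rcases lt_or_ge #S k with hSk | hSk
        · simp [hlow S hS hSk, hS]
        · have hSk' : (k : ℝ) ≤ #S := by exact_mod_cast hSk
          simp only [hS, if_false, add_zero]
          exact mul_le_mul_of_nonneg_right (by linarith) (sq_nonneg _)
    _ = (n - 2 * k) * ∑ S, walshCoeff g S ^ 2 + 2 * k := by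
        rw [sum_add_distrib, mul_sum, sum_ite_eq' univ ∅, if_pos (mem_univ _)]

lemma sum_sq_div_le_of_le_adjOp {g : (Fin n → Bool) → ℝ} {k : ℕ} (hg0 : ∀ x, 0 ≤ g x)
    (hAg : ∀ x, (n - 2 * k + 1 : ℝ) * g x ≤ adjOp g x) (h0 : walshCoeff g ∅ = 1)
    (hlow : ∀ S, S ≠ ∅ → #S < k → walshCoeff g S = 0) :
    (∑ x, g x ^ 2) / 2 ^ n ≤ 2 * k := by
  have hparseval : ∑ S, walshCoeff g S ^ 2 = (∑ x, g x ^ 2) / 2 ^ n := by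
    simpa only [sq] using sum_walshCoeff_mul_walshCoeff g g
  have hquad : (n - 2 * k + 1 : ℝ) * ∑ S, walshCoeff g S ^ 2
      ≤ ∑ S, (n - 2 * #S : ℝ) * walshCoeff g S ^ 2 :=
    calc (n - 2 * k + 1 : ℝ) * ∑ S, walshCoeff g S ^ 2
        = (∑ x, g x * ((n - 2 * k + 1 : ℝ) * g x)) / 2 ^ n := by
          rw [hparseval, mul_div_assoc', mul_sum]
          exact congrArg (· / _) (sum_congr rfl fun x _ => by ring)
      _ ≤ (∑ x, g x * adjOp g x) / 2 ^ n := by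
          gcongr with x
          · exact hg0 x
          · exact hAg x
      _ = ∑ S, (n - 2 * #S : ℝ) * walshCoeff g S ^ 2 := by
          rw [← sum_walshCoeff_mul_walshCoeff]
          exact sum_congr rfl fun S _ => by rw [walshCoeff_adjOp]; ring
  rw [← hparseval]
  linarith [sum_mul_walshCoeff_sq_le h0 hlow]

end BoolCube

open BoolCube

theorem second_moment_of_conv_general (n k : ℕ)
    (hkn : 2 * k ≤ n)
    (p : (Fin n → Bool) → ℝ) (hp0 : ∀ x, 0 ≤ p x)
    (hindep : KWiseIndep n (k - 1) p)
    (d : (Fin n → Bool) → ℝ) (hd0 : ∀ x, 0 ≤ d x)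
    (hdE : (∑ x, d x) / 2 ^ n = 1)
    (hAd : ∀ x, adjOp d x ≥ ((n : ℝ) - 2 * k + 1) * d x) :
    (∑ x, (cubeConv (fun x => 2 ^ n * p x) d x) ^ 2) / 2 ^ n ≤ (n : ℝ) := by
  set f : (Fin n → Bool) → ℝ := fun x => 2 ^ n * p x
  have hf0 : ∀ x, 0 ≤ f x := fun x => by have := hp0 x; positivity
  have hf : ∀ S : Finset (Fin n), #S ≤ k - 1 → walshCoeff f S = if S = ∅ then 1 else 0 :=
    fun S hS => by
      rw [walshCoeff_density]
      exact sum_mul_walsh_of_kWiseIndep hindep hS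
  have hAg : ∀ x, (n - 2 * k + 1 : ℝ) * cubeConv f d x ≤ adjOp (cubeConv f d) x := fun x => by
    rw [const_mul_cubeConv, adjOp_cubeConv]
    exact cubeConv_mono_right hf0 hAd x
  have h0 : walshCoeff (cubeConv f d) ∅ = 1 := by
    rw [walshCoeff_cubeConv, hf ∅ (by simp), walshCoeff_empty, hdE, if_pos rfl, one_mul]
  have hlow : ∀ S, S ≠ ∅ → #S < k → walshCoeff (cubeConv f d) S = 0 := fun S hS hSk => by
    rw [walshCoeff_cubeConv, hf S (by omega), if_neg hS, zero_mul]
  calc (∑ x, cubeConv f d x ^ 2) / 2 ^ n ≤ 2 * k :=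
        sum_sq_div_le_of_le_adjOp (cubeConv_nonneg hf0 hd0) hAg h0 hlow
    _ ≤ n := by exact_mod_cast hkn

/-- If `X` is `(k−1)`-wise independent with normalized density `f`, and `d ≥ 0` has
`E[d] = 1`, is supported on the Hamming ball of radius `r` around `0`, and satisfies
`Ad ≥ (n − 2k + 1)·d` pointwise, then `g = f ∗ d` has `E[g²] ≤ n`. -/
theorem second_moment_of_conv (n k r : ℕ) (hn : 0 < n) (hk : 0 < k) (hr : 0 < r)
    (hkn : 2 * k ≤ n)
    (p : (Fin n → Bool) → ℝ) (hp0 : ∀ x, 0 ≤ p x) (hp1 : ∑ x, p x = 1)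
    (hindep : KWiseIndep n (k - 1) p)
    (d : (Fin n → Bool) → ℝ) (hd0 : ∀ x, 0 ≤ d x)
    (hdE : (∑ x, d x) / 2 ^ n = 1)
    (hdsupp : ∀ x, d x ≠ 0 → hWt x ≤ r)
    (hAd : ∀ x, adjOp d x ≥ ((n : ℝ) - 2 * k + 1) * d x) :
    (∑ x, (cubeConv (fun x => 2 ^ n * p x) d x) ^ 2) / 2 ^ n ≤ (n : ℝ) :=
  second_moment_of_conv_general n k hkn p hp0 hindep d hd0 hdE hAd
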